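/- arXiv:2103.16823 — 2 statements merged into one kernel-verified Lean document; each statement's English description precedes it below -/
import Mathlib

section
/- Define on double forms H_g = ½(d^∇_V d^∇ + d^∇ d^∇_V). Then H_g commutes with transposition, H_g(ψᵀ) = (H_g ψ)ᵀ, and H_g commutes with each of the algebraic operators (g∧), Ɠ and Ɠ_V: H_g(g∧ψ) = g∧H_gψ, H_g Ɠψ = Ɠ H_gψ, and H_g Ɠ_V ψ = Ɠ_V H_g ψ. -/
section

variable {W : Type*} [AddCommGroup W] [Module ℝ W]

/-- The curl-curl operator `H_g = ½(d_V d + d d_V)` on double forms, where the vectorial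
exterior derivative is `d_V = T ∘ d ∘ T` (`T` = transposition). -/
noncomputable def Hg (T d : W →ₗ[ℝ] W) (x : W) : W :=
  (2⁻¹ : ℝ) • (T (d (T (d x))) + d (T (d (T x))))

/-- On double forms over a Riemannian manifold `(M,g)` — modelled as a
real module `W` with transposition `T` (involution), exterior covariant derivative `d`,
metric wedge `g∧` (transpose-equivariant, since `g` is symmetric), and Bianchi sum `Ɠ`,
satisfying the context identities `d(g∧·) = -g∧ d(·)`, `Ɠ∘d = -d∘Ɠ` and
`d = Ɠ d_V + d_V Ɠ` (with `d_V = T∘d∘T`) — the operator `H_g = ½(d_V d + d d_V)`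
commutes with transposition, `H_g(ψᵀ) = (H_g ψ)ᵀ`, and with each of the algebraic
operators `(g∧)`, `Ɠ` and `Ɠ_V = T∘Ɠ∘T`. -/
theorem Hg_commutations
    (T d wedgeG bianchi : W →ₗ[ℝ] W)
    (hT2 : ∀ x, T (T x) = x)
    (hTg : ∀ x, T (wedgeG x) = wedgeG (T x))
    (hdg : ∀ x, d (wedgeG x) = - wedgeG (d x))
    (hGd : ∀ x, bianchi (d x) = - d (bianchi x))
    (hdecomp : ∀ x, d x = bianchi (T (d (T x))) + T (d (T (bianchi x)))) :
    (∀ x, Hg T d (T x) = T (Hg T d x)) ∧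
    (∀ x, Hg T d (wedgeG x) = wedgeG (Hg T d x)) ∧
    (∀ x, Hg T d (bianchi x) = bianchi (Hg T d x)) ∧
    (∀ x, Hg T d (T (bianchi (T x))) = T (bianchi (T (Hg T d x)))) := by
  have hdG : ∀ y, d (bianchi y) = - bianchi (d y) := by
    intro y; rw [hGd, neg_neg]
  have hdVG : ∀ y, T (d (T (bianchi y))) = d y - bianchi (T (d (T y))) := by
    intro y; rw [hdecomp y]; abel
  have h1 : ∀ x, Hg T d (T x) = T (Hg T d x) := by
    intro x
    simp only [Hg, map_smul, map_add, hT2]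
    rw [add_comm]
  have h2 : ∀ x, Hg T d (wedgeG x) = wedgeG (Hg T d x) := by
    intro x
    simp only [Hg, map_smul, map_add, hdg, hTg, map_neg, neg_neg]
  have h3 : ∀ x, Hg T d (bianchi x) = bianchi (Hg T d x) := by
    intro x
    simp only [Hg, map_smul, map_add]
    rw [hdG x]
    simp only [map_neg]
    rw [hdVG (d x), hdVG x, map_sub, hdG (T (d (T x)))]
    congr 1
    abel
  refine ⟨h1, h2, h3, fun x => ?_⟩
  rw [h1, h3, h1]

end
end

section
/- The commutators of d^∇ with d^∇_V and of δ^∇ with d^∇_V on double forms are given by algebraic conjugates of curvature terms: [d^∇, d^∇_V] = d^∇d^∇ Ɠ_V − Ɠ_V d^∇d^∇, and [δ^∇, d^∇_V] = d^∇_V d^∇_V Tr_g − Tr_g d^∇_V d^∇_V. -/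
/-- On double forms over a Riemannian manifold — with exterior covariant
derivative `d`, vectorial exterior derivative `d_V = Ɠ_V d + d Ɠ_V` (`Ɠ_V` the transposed
Bianchi sum), metric trace `Tr_g`, and codifferential `δ = -Tr_g d_V - d_V Tr_g` — the
commutators of `d` with `d_V` and of `δ` with `d_V` are given by algebraic conjugates of
curvature terms: `[d, d_V] = dd Ɠ_V − Ɠ_V dd` and
`[δ, d_V] = d_V d_V Tr_g − Tr_g d_V d_V`. -/
theorem commutators_d_dV {W : Type*} [AddCommGroup W] [Module ℝ W]
    (dd dV delta gV trg : W →ₗ[ℝ] W)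
    (hdV : ∀ x, dV x = gV (dd x) + dd (gV x))
    (hdelta : ∀ x, delta x = -(trg (dV x)) - dV (trg x)) :
    (∀ x, dd (dV x) - dV (dd x) = dd (dd (gV x)) - gV (dd (dd x))) ∧
    (∀ x, delta (dV x) - dV (delta x) = dV (dV (trg x)) - trg (dV (dV x))) := by
  constructor
  · intro x
    rw [hdV x, hdV (dd x)]
    simp [map_add]
    abel
  · intro x
    rw [hdelta (dV x), hdelta x]
    simp [map_sub, map_neg]
    abel
end
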